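/- Fix e∈[0,1), e_J∈[0,1), Θ∈ℝ, G>0, and define Ā₁(a), B̄₁(a), C̄₁(a) as in the context. Then there exists a₀>0 such that for all a with 0<a<a₀ the determinant D₁(a) = Ā₁(a)·C̄₁(a) − B̄₁(a)² is strictly positive. (The leading term is 9(1 + 3e² − 4e⁴)·a⁴/(16G²(1−e_J²)³), and 1 + 3e² − 4e⁴ = (1−e²)(1+4e²) > 0.) -/

import Mathlib

open Real

/-- Averaged coefficient `Ā₁` of `p₃²` in the small-inclination case, `ω+Ω=Θ`. -/
noncomputable def Abar1 (e eJ Θ G a : ℝ) : ℝ :=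
  3 * (1 + 4 * e ^ 2 - 5 * e ^ 2 * Real.cos Θ ^ 2) * a ^ 2 /
      (4 * G * (1 - eJ ^ 2) ^ ((3:ℝ) / 2))
    + 15 * e * eJ * Real.cos Θ * (70 * e ^ 2 * Real.cos Θ ^ 2 - 60 * e ^ 2 - 10) * a ^ 3 /
      (64 * G * (1 - eJ ^ 2) ^ ((5:ℝ) / 2))

/-- Averaged coefficient `B̄₁` of `p₃q₃` in the small-inclination case, `ω+Ω=Θ`. -/
noncomputable def Bbar1 (e eJ Θ G a : ℝ) : ℝ :=
  15 * e ^ 2 * Real.cos Θ * Real.sin Θ * a ^ 2 /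
      (4 * G * (1 - eJ ^ 2) ^ ((3:ℝ) / 2))
    - 15 * e * Real.sin Θ * eJ * (140 * e ^ 2 * Real.cos Θ ^ 2 - 17 * e ^ 2 + 24) * a ^ 3 /
      (128 * G * (1 - eJ ^ 2) ^ ((5:ℝ) / 2))

/-- Averaged coefficient `C̄₁` of `q₃²` in the small-inclination case, `ω+Ω=Θ`. -/
noncomputable def Cbar1 (e eJ Θ G a : ℝ) : ℝ :=
  3 * (1 - e ^ 2 + 5 * e ^ 2 * Real.cos Θ ^ 2) * a ^ 2 /
      (4 * G * (1 - eJ ^ 2) ^ ((3:ℝ) / 2))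
    - 15 * e * eJ * Real.cos Θ * (70 * e ^ 2 * Real.cos Θ ^ 2 - 27 * e ^ 2 + 34) * a ^ 3 /
      (64 * G * (1 - eJ ^ 2) ^ ((5:ℝ) / 2))

/-!
Each coefficient is `a²` times an affine function of `a`, so `D₁(a) = a⁴ g(a)` with `g` a
polynomial. At `a = 0` the quadratic parts give
`g(0) = 9 (1 - e²)(1 + 4e²) / (16 G² (1 - e_J²)³) > 0`, because the mixed terms cancel via
`sin² Θ = 1 - cos² Θ`; by continuity `g` stays positive for small `a`.
-/

open Filter Topology Set

theorem eventually_nhdsGT_zero_det_pos {a₂ a₃ b₂ b₃ c₂ c₃ : ℝ} (h : 0 < a₂ * c₂ - b₂ ^ 2) :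
    ∀ᶠ x in 𝓝[>] 0,
      0 < (a₂ * x ^ 2 + a₃ * x ^ 3) * (c₂ * x ^ 2 + c₃ * x ^ 3) - (b₂ * x ^ 2 + b₃ * x ^ 3) ^ 2 := by
  set g : ℝ → ℝ := fun x => (a₂ + a₃ * x) * (c₂ + c₃ * x) - (b₂ + b₃ * x) ^ 2
  have hg0 : 0 < g 0 := by simpa [g] using h
  have hg : ∀ᶠ x in 𝓝 0, 0 < g x :=
    ((show Continuous g by fun_prop).tendsto 0).eventually (eventually_gt_nhds hg0)
  filter_upwards [nhdsWithin_le_nhds hg, self_mem_nhdsWithin] with x hgx (hx : 0 < x)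
  have hfactor : (a₂ * x ^ 2 + a₃ * x ^ 3) * (c₂ * x ^ 2 + c₃ * x ^ 3)
      - (b₂ * x ^ 2 + b₃ * x ^ 3) ^ 2 = x ^ 4 * g x := by ring
  rw [hfactor]
  positivity

theorem quadratic_part_det_eq {e c s : ℝ} (hcs : s ^ 2 + c ^ 2 = 1) :
    (1 + 4 * e ^ 2 - 5 * e ^ 2 * c ^ 2) * (1 - e ^ 2 + 5 * e ^ 2 * c ^ 2) - (5 * e ^ 2 * c * s) ^ 2
      = (1 - e ^ 2) * (1 + 4 * e ^ 2) := by
  linear_combination (-25 * e ^ 4 * c ^ 2) * hcs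

section Coefficients

variable (e eJ Θ G a : ℝ)

theorem Abar1_eq : Abar1 e eJ Θ G a =
    3 / (4 * G * (1 - eJ ^ 2) ^ ((3:ℝ) / 2)) * (1 + 4 * e ^ 2 - 5 * e ^ 2 * cos Θ ^ 2) * a ^ 2
      + 15 * e * eJ * cos Θ * (70 * e ^ 2 * cos Θ ^ 2 - 60 * e ^ 2 - 10)
        / (64 * G * (1 - eJ ^ 2) ^ ((5:ℝ) / 2)) * a ^ 3 := by
  unfold Abar1; ring

theorem Bbar1_eq : Bbar1 e eJ Θ G a =
    3 / (4 * G * (1 - eJ ^ 2) ^ ((3:ℝ) / 2)) * (5 * e ^ 2 * cos Θ * sin Θ) * a ^ 2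
      + -(15 * e * sin Θ * eJ * (140 * e ^ 2 * cos Θ ^ 2 - 17 * e ^ 2 + 24)
        / (128 * G * (1 - eJ ^ 2) ^ ((5:ℝ) / 2))) * a ^ 3 := by
  unfold Bbar1; ring

theorem Cbar1_eq : Cbar1 e eJ Θ G a =
    3 / (4 * G * (1 - eJ ^ 2) ^ ((3:ℝ) / 2)) * (1 - e ^ 2 + 5 * e ^ 2 * cos Θ ^ 2) * a ^ 2
      + -(15 * e * eJ * cos Θ * (70 * e ^ 2 * cos Θ ^ 2 - 27 * e ^ 2 + 34)
        / (64 * G * (1 - eJ ^ 2) ^ ((5:ℝ) / 2))) * a ^ 3 := by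
  unfold Cbar1; ring

end Coefficients

theorem determinant_pos_small_inclination
    (e eJ Θ G : ℝ) (he0 : 0 ≤ e) (he1 : e < 1) (heJ0 : 0 ≤ eJ) (heJ1 : eJ < 1)
    (hG : 0 < G) :
    ∃ a₀ > 0, ∀ a : ℝ, 0 < a → a < a₀ →
      0 < Abar1 e eJ Θ G a * Cbar1 e eJ Θ G a - Bbar1 e eJ Θ G a ^ 2 := by
  set k := 3 / (4 * G * (1 - eJ ^ 2) ^ ((3:ℝ) / 2))
  have hk : 0 < k := by
    have : 0 < 1 - eJ ^ 2 := by nlinarith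
    positivity
  have hlead : 0 < k * (1 + 4 * e ^ 2 - 5 * e ^ 2 * cos Θ ^ 2)
      * (k * (1 - e ^ 2 + 5 * e ^ 2 * cos Θ ^ 2)) - (k * (5 * e ^ 2 * cos Θ * sin Θ)) ^ 2 := by
    rw [show _ - _ = k ^ 2 * ((1 - e ^ 2) * (1 + 4 * e ^ 2)) by
      rw [← quadratic_part_det_eq (sin_sq_add_cos_sq Θ)]; ring]
    have : 0 < 1 - e ^ 2 := by nlinarith
    positivity
  obtain ⟨a₀, ha₀, hsub⟩ :=
    mem_nhdsGT_iff_exists_Ioo_subset.mp (eventually_nhdsGT_zero_det_pos hlead)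
  refine ⟨a₀, ha₀, fun a ha haa₀ => ?_⟩
  rw [Abar1_eq, Bbar1_eq, Cbar1_eq]
  exact hsub ⟨ha, haa₀⟩
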